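/- arXiv:2111.14692 — 2 statements merged into one kernel-verified Lean document; each statement's English description precedes it below -/
import Mathlib

section
/- The subgroup of GL(3,ℝ) generated by R and T is the free product of ⟨R⟩ ≅ ℤ/4ℤ and ⟨T⟩ ≅ ℤ/2ℤ. Precisely: R has order 4, T has order 2, and the group homomorphism from the free product (ℤ/4ℤ) ∗ (ℤ/2ℤ) to GL(3,ℝ) sending the generator of ℤ/4ℤ to R and the generator of ℤ/2ℤ to T is injective. -/
open Matrix

/-- The matrix `R`. -/
def Rmat : Matrix (Fin 3) (Fin 3) ℝ := !![0,0,-1; 1,0,-1; 0,1,-1]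

/-- The matrix `T`. -/
def Tmat : Matrix (Fin 3) (Fin 3) ℝ := !![-1,0,0; 2,1,0; -4,0,1]

/-- `R` as an element of `GL(3, ℝ)` (its inverse is `R³`, since `R⁴ = I`). -/
noncomputable def RGL : Matrix.GeneralLinearGroup (Fin 3) ℝ :=
  ⟨Rmat, Rmat ^ 3,
   by rw [Matrix.one_fin_three]; simp [Rmat, pow_succ, Matrix.mul_fin_three],
   by rw [Matrix.one_fin_three]; simp [Rmat, pow_succ, Matrix.mul_fin_three]⟩

/-- `T` as an element of `GL(3, ℝ)` (it is its own inverse, since `T² = I`). -/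
noncomputable def TGL : Matrix.GeneralLinearGroup (Fin 3) ℝ :=
  ⟨Tmat, Tmat,
   by rw [Matrix.one_fin_three]; simp [Tmat, Matrix.mul_fin_three],
   by rw [Matrix.one_fin_three]; simp [Tmat, Matrix.mul_fin_three]⟩

/-! ### Auxiliary: action of `GL(3,ℝ)` on `ℝ³` -/

noncomputable instance : SMul (Matrix.GeneralLinearGroup (Fin 3) ℝ) (Fin 3 → ℝ) :=
  ⟨fun g v => (g : Matrix (Fin 3) (Fin 3) ℝ).mulVec v⟩

lemma glsmul_def (g : Matrix.GeneralLinearGroup (Fin 3) ℝ) (v : Fin 3 → ℝ) :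
    g • v = (g : Matrix (Fin 3) (Fin 3) ℝ).mulVec v := rfl

noncomputable instance : MulAction (Matrix.GeneralLinearGroup (Fin 3) ℝ) (Fin 3 → ℝ) where
  one_smul v := by rw [glsmul_def]; simp
  mul_smul g h v := by simp [glsmul_def, Matrix.mulVec_mulVec]

/-! ### Ping-pong sets

The group preserves the Lorentzian quadratic form
`Q(v) = 3v₀²+3v₁²+3v₂²+2v₀v₁−10v₀v₂+2v₁v₂` of signature (2,1), hence acts on the
hyperbolic plane.  `XB` is the (projectivized) region beyond the geodesic fixed by the
rotation `T`, and `XA` is the union of its three images under `R, R², R³`. -/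

def XB : Set (Fin 3 → ℝ) :=
  {v | 3*(v 0)^2+3*(v 1)^2+3*(v 2)^2+2*(v 0)*(v 1)-10*(v 0)*(v 2)+2*(v 1)*(v 2) < 0 ∧
       (3*(v 0)+(v 1)-(v 2))*((v 0)-(v 1)+(v 2)) < 0}

def XA : Set (Fin 3 → ℝ) :=
  (fun v => Rmat.mulVec v) '' XB ∪
  ((fun v => Rmat.mulVec (Rmat.mulVec v)) '' XB ∪
   (fun v => Rmat.mulVec (Rmat.mulVec (Rmat.mulVec v))) '' XB)

lemma R_mulVec (v : Fin 3 → ℝ) : Rmat.mulVec v = ![-(v 2), v 0 - v 2, v 1 - v 2] := by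
  funext i
  fin_cases i <;>
    simp [Rmat, Matrix.mulVec, dotProduct, Fin.sum_univ_three, Matrix.vecHead, Matrix.vecTail] <;> ring

lemma T_mulVec (v : Fin 3 → ℝ) : Tmat.mulVec v = ![-(v 0), 2*(v 0) + v 1, -4*(v 0) + v 2] := by
  funext i
  fin_cases i <;>
    simp [Tmat, Matrix.mulVec, dotProduct, Fin.sum_univ_three, Matrix.vecHead, Matrix.vecTail] <;> ring

lemma memXB_TR {v : Fin 3 → ℝ} (h : v ∈ XB) : Tmat.mulVec (Rmat.mulVec v) ∈ XB := by
  obtain ⟨hQ, hP⟩ := h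
  rw [R_mulVec, T_mulVec]
  constructor <;> simp <;>
  nlinarith [sq_nonneg (7*(v 0) - v 1 - 9*(v 2)), sq_nonneg (v 1 + 2*(v 2)), hQ, hP]

lemma memXB_TR2 {v : Fin 3 → ℝ} (h : v ∈ XB) :
    Tmat.mulVec (Rmat.mulVec (Rmat.mulVec v)) ∈ XB := by
  obtain ⟨hQ, hP⟩ := h
  rw [R_mulVec, R_mulVec, T_mulVec]
  constructor <;> simp <;>
  nlinarith [sq_nonneg (v 0 + v 1 - v 2), sq_nonneg (v 1 - v 2), hQ, hP]

lemma memXB_TR3 {v : Fin 3 → ℝ} (h : v ∈ XB) :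
    Tmat.mulVec (Rmat.mulVec (Rmat.mulVec (Rmat.mulVec v))) ∈ XB := by
  obtain ⟨hQ, hP⟩ := h
  rw [R_mulVec, R_mulVec, R_mulVec, T_mulVec]
  constructor <;> simp <;>
  nlinarith [sq_nonneg (9*(v 0) - 7*(v 1) - 3*(v 2)), sq_nonneg (v 1), hQ, hP]

lemma disj_R {v : Fin 3 → ℝ} (h : v ∈ XB) (h2 : Rmat.mulVec v ∈ XB) : False := by
  obtain ⟨hQ, hP⟩ := h
  rw [R_mulVec] at h2
  obtain ⟨_, h2P⟩ := h2
  simp at h2P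
  nlinarith [sq_nonneg (5*(v 0) + v 1 - 3*(v 2)), sq_nonneg (v 1 + 2*(v 2)), hQ, hP, h2P]

lemma disj_R2 {v : Fin 3 → ℝ} (h : v ∈ XB) (h2 : Rmat.mulVec (Rmat.mulVec v) ∈ XB) : False := by
  obtain ⟨hQ, hP⟩ := h
  rw [R_mulVec, R_mulVec] at h2
  obtain ⟨_, h2P⟩ := h2
  simp at h2P
  nlinarith [sq_nonneg (v 0 - v 1 + v 2), hP, h2P]

lemma disj_R3 {v : Fin 3 → ℝ} (h : v ∈ XB)
    (h2 : Rmat.mulVec (Rmat.mulVec (Rmat.mulVec v)) ∈ XB) : False := by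
  obtain ⟨hQ, hP⟩ := h
  rw [R_mulVec, R_mulVec, R_mulVec] at h2
  obtain ⟨_, h2P⟩ := h2
  simp at h2P
  nlinarith [sq_nonneg (3*(v 0) - v 1 - v 2), sq_nonneg (v 1), hQ, hP, h2P]

lemma XB_nonempty : XB.Nonempty := by
  refine ⟨![1,-1,3], ?_, ?_⟩ <;> norm_num [XB, Matrix.cons_val_two, Matrix.vecHead, Matrix.vecTail]

lemma TXA_subset {v : Fin 3 → ℝ} (h : v ∈ XA) : Tmat.mulVec v ∈ XB := by
  rcases h with ⟨u, hu, rfl⟩ | ⟨u, hu, rfl⟩ | ⟨u, hu, rfl⟩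
  · exact memXB_TR hu
  · exact memXB_TR2 hu
  · exact memXB_TR3 hu

lemma XA_disj_XB {v : Fin 3 → ℝ} (h : v ∈ XA) (h2 : v ∈ XB) : False := by
  rcases h with ⟨u, hu, rfl⟩ | ⟨u, hu, rfl⟩ | ⟨u, hu, rfl⟩
  · exact disj_R hu h2
  · exact disj_R2 hu h2
  · exact disj_R3 hu h2

/-! ### Comparing `Monoid.Coprod` with the indexed coproduct `Monoid.CoprodI` -/

abbrev GL3 := Matrix.GeneralLinearGroup (Fin 3) ℝ

abbrev Hfam : Bool → Type
  | true => Multiplicative (ZMod 4)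
  | false => Multiplicative (ZMod 2)

instance Hfam_group : ∀ b, Group (Hfam b)
  | true => inferInstanceAs (Group (Multiplicative (ZMod 4)))
  | false => inferInstanceAs (Group (Multiplicative (ZMod 2)))

def ffam (φ : Monoid.Coprod (Multiplicative (ZMod 4)) (Multiplicative (ZMod 2)) →* GL3) :
    ∀ b, Hfam b →* GL3
  | true => φ.comp Monoid.Coprod.inl
  | false => φ.comp Monoid.Coprod.inr

def θmap : Monoid.Coprod (Multiplicative (ZMod 4)) (Multiplicative (ZMod 2)) →*
    Monoid.CoprodI Hfam :=
  Monoid.Coprod.lift (Monoid.CoprodI.of (M := Hfam) (i := true))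
    (Monoid.CoprodI.of (M := Hfam) (i := false))

def σmap : Monoid.CoprodI Hfam →*
    Monoid.Coprod (Multiplicative (ZMod 4)) (Multiplicative (ZMod 2)) :=
  Monoid.CoprodI.lift (fun b => match b with
    | true => Monoid.Coprod.inl
    | false => Monoid.Coprod.inr)

lemma σθ : ∀ x, σmap (θmap x) = x := by
  intro x
  have h : σmap.comp θmap = MonoidHom.id _ := by
    apply Monoid.Coprod.hom_ext <;> ext y <;>
      simp [σmap, θmap, Monoid.Coprod.lift_apply_inl, Monoid.Coprod.lift_apply_inr,
        Monoid.CoprodI.lift_of]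
  exact DFunLike.congr_fun h x

lemma θ_inj : Function.Injective θmap := Function.LeftInverse.injective σθ

lemma phi_eq (φ : Monoid.Coprod (Multiplicative (ZMod 4)) (Multiplicative (ZMod 2)) →* GL3) :
    φ = (Monoid.CoprodI.lift (ffam φ)).comp θmap := by
  apply Monoid.Coprod.hom_ext <;> ext y <;>
    simp [θmap, ffam, Monoid.Coprod.lift_apply_inl, Monoid.Coprod.lift_apply_inr,
      Monoid.CoprodI.lift_of]

lemma hcard : (3 : Cardinal) ≤ Cardinal.mk Bool ∨ ∃ i, (3:Cardinal) ≤ Cardinal.mk (Hfam i) := by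
  right
  refine ⟨true, ?_⟩
  show (3 : Cardinal) ≤ Cardinal.mk (Multiplicative (ZMod 4))
  rw [Cardinal.mk_fintype]
  norm_num

/-- The ping-pong table. -/
def Xfam : Bool → Set (Fin 3 → ℝ)
  | true => XA
  | false => XB

/-! ### Order computations -/

lemma orderR : orderOf RGL = 4 := by
  rw [orderOf_eq_iff (by norm_num)]
  constructor
  · apply Units.ext
    show Rmat ^ 4 = 1
    rw [Matrix.one_fin_three]; simp [Rmat, pow_succ, Matrix.mul_fin_three]
  · intro m hm hm' heq
    have h : Rmat ^ m = 1 := by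
      have := congrArg Units.val heq
      simpa [RGL] using this
    have h00 := congrFun (congrFun h 0) 0
    interval_cases m <;>
      simp [Rmat, pow_succ, Matrix.mul_fin_three, Matrix.one_fin_three] at h00 <;>
      norm_num at h00

lemma orderT : orderOf TGL = 2 := by
  have : Fact (Nat.Prime 2) := ⟨Nat.prime_two⟩
  apply orderOf_eq_prime
  · apply Units.ext
    show Tmat ^ 2 = 1
    rw [Matrix.one_fin_three]; simp [Tmat, pow_succ, Matrix.mul_fin_three]
  · intro heq
    have h : Tmat = 1 := by
      have := congrArg Units.val heq
      simpa [TGL] using this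
    have h00 := congrFun (congrFun h 0) 0
    simp [Tmat, Matrix.one_fin_three] at h00
    norm_num at h00

/-! ### The main theorem -/

open Pointwise in
/-- The subgroup of `GL(3,ℝ)` generated by `R` and `T` is the free product
`ℤ/4ℤ * ℤ/2ℤ`: `R` has order 4, `T` has order 2, and the homomorphism from the
free product `(ℤ/4ℤ) ∗ (ℤ/2ℤ)` sending the generators to `R` and `T` is injective. -/
theorem free_product_Z4_Z2 :
    orderOf RGL = 4 ∧ orderOf TGL = 2 ∧
    ∀ φ : Monoid.Coprod (Multiplicative (ZMod 4)) (Multiplicative (ZMod 2)) →*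
        Matrix.GeneralLinearGroup (Fin 3) ℝ,
      φ (Monoid.Coprod.inl (Multiplicative.ofAdd (1 : ZMod 4))) = RGL →
      φ (Monoid.Coprod.inr (Multiplicative.ofAdd (1 : ZMod 2))) = TGL →
      Function.Injective φ := by
  refine ⟨orderR, orderT, ?_⟩
  intro φ hRφ hTφ
  -- nonemptiness of the ping-pong sets
  have hXne : ∀ i, (Xfam i).Nonempty := by
    intro i
    obtain ⟨v, hv⟩ := XB_nonempty
    cases i
    · exact ⟨v, hv⟩
    · exact ⟨Rmat.mulVec v, Or.inl ⟨v, hv, rfl⟩⟩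
  -- disjointness
  have hXdisj : Pairwise (Function.onFun Disjoint Xfam) := by
    intro i j hij
    cases i <;> cases j <;> try exact absurd rfl hij
    · exact Set.disjoint_left.mpr fun x hx hx' => XA_disj_XB hx' hx
    · exact Set.disjoint_left.mpr fun x hx hx' => XA_disj_XB hx hx'
  -- values of φ on powers of the generators
  have hR2φ : φ (Monoid.Coprod.inl (Multiplicative.ofAdd (2 : ZMod 4))) = RGL * RGL := by
    have e : (Multiplicative.ofAdd (2 : ZMod 4)) =
        Multiplicative.ofAdd (1 : ZMod 4) * Multiplicative.ofAdd (1 : ZMod 4) := by decide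
    rw [e, _root_.map_mul, _root_.map_mul, hRφ]
  have hR3φ : φ (Monoid.Coprod.inl (Multiplicative.ofAdd (3 : ZMod 4))) = RGL * RGL * RGL := by
    have e : (Multiplicative.ofAdd (3 : ZMod 4)) =
        Multiplicative.ofAdd (2 : ZMod 4) * Multiplicative.ofAdd (1 : ZMod 4) := by decide
    rw [e, _root_.map_mul, _root_.map_mul, hR2φ, hRφ]
  -- smul descriptions
  have sm1 : ∀ v : Fin 3 → ℝ, RGL • v = Rmat.mulVec v := fun v => rfl
  have sm2 : ∀ v : Fin 3 → ℝ, (RGL * RGL) • v = Rmat.mulVec (Rmat.mulVec v) := by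
    intro v
    rw [glsmul_def, Units.val_mul, ← Matrix.mulVec_mulVec]
    rfl
  have sm3 : ∀ v : Fin 3 → ℝ,
      (RGL * RGL * RGL) • v = Rmat.mulVec (Rmat.mulVec (Rmat.mulVec v)) := by
    intro v
    rw [glsmul_def, Units.val_mul, Units.val_mul, ← Matrix.mulVec_mulVec, ← Matrix.mulVec_mulVec]
    rfl
  have smT : ∀ v : Fin 3 → ℝ, TGL • v = Tmat.mulVec v := fun v => rfl
  -- the ping-pong hypothesis
  have hpp : Pairwise fun i j => ∀ h : Hfam i, h ≠ 1 →
      (ffam φ) i h • Xfam j ⊆ Xfam i := by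
    intro i j hij
    cases i <;> cases j <;> try exact absurd rfl hij
    · -- i = false (the ⟨T⟩ factor), j = true : T • XA ⊆ XB
      intro h hne
      have hh : h = Multiplicative.ofAdd (1 : ZMod 2) := by revert hne; revert h; decide
      subst hh
      have : (ffam φ) false (Multiplicative.ofAdd (1 : ZMod 2)) = TGL := hTφ
      rw [this]
      rintro x ⟨u, hu, rfl⟩
      show TGL • u ∈ Xfam false
      rw [smT]
      exact TXA_subset hu
    · -- i = true (the ⟨R⟩ factor), j = false : Rᵏ • XB ⊆ XA
      intro h hne
      have hh : h = Multiplicative.ofAdd (1 : ZMod 4) ∨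
          h = Multiplicative.ofAdd (2 : ZMod 4) ∨ h = Multiplicative.ofAdd (3 : ZMod 4) := by
        revert hne; revert h; decide
      rcases hh with rfl | rfl | rfl
      · have : (ffam φ) true (Multiplicative.ofAdd (1 : ZMod 4)) = RGL := hRφ
        rw [this]
        rintro x ⟨u, hu, rfl⟩
        show (RGL) • u ∈ Xfam true
        rw [sm1]
        exact Or.inl ⟨u, hu, rfl⟩
      · have : (ffam φ) true (Multiplicative.ofAdd (2 : ZMod 4)) = RGL * RGL := hR2φ
        rw [this]
        rintro x ⟨u, hu, rfl⟩
        show (RGL * RGL) • u ∈ Xfam true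
        rw [sm2]
        exact Or.inr (Or.inl ⟨u, hu, rfl⟩)
      · have : (ffam φ) true (Multiplicative.ofAdd (3 : ZMod 4)) = RGL * RGL * RGL := hR3φ
        rw [this]
        rintro x ⟨u, hu, rfl⟩
        show (RGL * RGL * RGL) • u ∈ Xfam true
        rw [sm3]
        exact Or.inr (Or.inr ⟨u, hu, rfl⟩)
  have hψ : Function.Injective (Monoid.CoprodI.lift (ffam φ)) :=
    Monoid.CoprodI.lift_injective_of_ping_pong (ffam φ) hcard Xfam hXne hXdisj hpp
  rw [phi_eq φ, MonoidHom.coe_comp]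
  exact hψ.comp θ_inj
end

section
/- (Unit circle invariance.) The maps r and t preserve the unit circle: if a,b ∈ ℝ satisfy a² + b² = 1, then 2a + 2b − 3 ≠ 0, the point r(a,b) = (b,−a) satisfies b² + (−a)² = 1, and the point t(a,b) = ((2a+b−2)/(2a+2b−3), (a+2b−2)/(2a+2b−3)) satisfies ((2a+b−2)/(2a+2b−3))² + ((a+2b−2)/(2a+2b−3))² = 1. -/
/-- Unit circle invariance: the maps `r(a,b) = (b,−a)` and
`t(a,b) = ((2a+b−2)/(2a+2b−3), (a+2b−2)/(2a+2b−3))` preserve the unit circle. -/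
theorem unit_circle_invariance (a b : ℝ) (h : a ^ 2 + b ^ 2 = 1) :
    2 * a + 2 * b - 3 ≠ 0 ∧
    b ^ 2 + (-a) ^ 2 = 1 ∧
    ((2 * a + b - 2) / (2 * a + 2 * b - 3)) ^ 2 +
      ((a + 2 * b - 2) / (2 * a + 2 * b - 3)) ^ 2 = 1 := by
  have hne : 2 * a + 2 * b - 3 ≠ 0 := by
    intro h0
    nlinarith [sq_nonneg (a - b), sq_nonneg (a + b)]
  refine ⟨hne, by nlinarith, ?_⟩
  rw [div_pow, div_pow, ← add_div, div_eq_one_iff_eq (pow_ne_zero 2 hne)]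
  nlinarith [sq_nonneg (a + b)]
end
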